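/- arXiv:0711.2211 — 2 statements merged into one kernel-verified Lean document; each statement's English description precedes it below -/
import Mathlib

section
/- Let g₁₁, g₂₂ > 0, g₁₂ real with g₁₁g₂₂ − g₁₂² > 0, and let a, b, c be real with c ≠ 0. Then for all (ξ, η) ≠ (0,0), the quantity c⁴(g₂₂ξ² + g₁₁η² − 2g₁₂ξη)² + c²(a²+b²)(g₂₂ξ² + g₁₁η² − 3g₁₂ξη)² + (c²(a²+b²)g₁₂²/(g₁₁g₂₂))(g₁₁η² + g₂₂ξ² − g₁₂ξη)² is strictly positive. -/
/- The first term alone is already positive: `g22 ξ² + g11 η² − 2 g12 ξη` is the quadratic form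
of the adjugate of the positive definite metric `g`, hence positive off the origin, and the other
two terms are squares with nonnegative coefficients. -/

/-- Completing the square: `C (A x² + 2Bxy + Cy²) = (Bx + Cy)² + (AC − B²) x²`. -/
lemma binary_quadratic_pos {A B C x y : ℝ} (hC : 0 < C) (hdisc : B ^ 2 < A * C)
    (hxy : (x, y) ≠ (0, 0)) : 0 < A * x ^ 2 + 2 * B * x * y + C * y ^ 2 := by
  have hsq : C * (A * x ^ 2 + 2 * B * x * y + C * y ^ 2)
      = (B * x + C * y) ^ 2 + (A * C - B ^ 2) * x ^ 2 := by ring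
  rcases eq_or_ne x 0 with rfl | hx
  · have hy : y ≠ 0 := fun hy => hxy (by rw [hy])
    have : 0 < y ^ 2 := by positivity
    simpa using mul_pos hC this
  · refine pos_of_mul_pos_right (a := C) ?_ hC.le
    rw [hsq]
    have : 0 < x ^ 2 := by positivity
    have := mul_pos (sub_pos.mpr hdisc) this
    positivity

theorem stmt_3 (g11 g22 g12 a b c ξ η : ℝ)
    (hg11 : 0 < g11) (hg22 : 0 < g22) (hdet : 0 < g11 * g22 - g12 ^ 2)
    (hc : c ≠ 0) (hξη : (ξ, η) ≠ (0, 0)) :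
    0 < c ^ 4 * (g22 * ξ ^ 2 + g11 * η ^ 2 - 2 * g12 * ξ * η) ^ 2
      + c ^ 2 * (a ^ 2 + b ^ 2) * (g22 * ξ ^ 2 + g11 * η ^ 2 - 3 * g12 * ξ * η) ^ 2
      + (c ^ 2 * (a ^ 2 + b ^ 2) * g12 ^ 2 / (g11 * g22))
          * (g11 * η ^ 2 + g22 * ξ ^ 2 - g12 * ξ * η) ^ 2 := by
  have hQ : 0 < g22 * ξ ^ 2 + g11 * η ^ 2 - 2 * g12 * ξ * η := by
    have := binary_quadratic_pos (A := g22) (B := -g12) hg11 (by linarith) hξη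
    linarith
  have hmain : 0 < c ^ 4 * (g22 * ξ ^ 2 + g11 * η ^ 2 - 2 * g12 * ξ * η) ^ 2 :=
    mul_pos (by positivity) (pow_pos hQ 2)
  exact add_pos_of_pos_of_nonneg (add_pos_of_pos_of_nonneg hmain (by positivity)) (by positivity)
end

section
/- Under the hypotheses of the previous frame computation, the Ricci curvature satisfies Ric(Je₁, e₂) = ½ Σ_A K(e₁, e₂, e_A, Je_A) = sin α (K₁₂₁₃ − K₁₂₂₄) + cos α (K₁₂₁₂ + K₁₂₃₄) = (1/cos α)(K₁₂₁₂ + K₁₂₃₄), provided cos α ≠ 0. -/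
/-!
Indices are 0-based, so `K ![e 0, e 1, e 0, e 2]` is the paper's `K₁₂₁₃`; write `c = cos α`,
`s = sin α`. For fixed `Z, W`, the 2-form `ω = K(·, ·, Z, W)` is alternating and `J`-invariant;
evaluating the invariance on the pairs `(e₀, e₃)`, `(e₀, e₂)`, `(e₂, e₃)` shows that `ω` is of type
`(1,1)`: `ω₀₃ + ω₁₂ = 0` and `s (ω₀₁ + ω₂₃) = c (ω₀₂ - ω₁₃)`.

Expanding `Ric(Je₀, e₁)` along `Je₀ = c e₁ + s e₂` gives
`c (K₀₁₀₁ + K₁₂₁₂ + K₁₃₁₃) + s (K₀₁₀₂ + K₂₃₁₃)`; the second relation at `(Z, W) = (e₁, e₃)`, the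
Bianchi identity and the first relation at `(e₁, e₂)` turn this into the first formula. The second
relation at `(e₀, e₁)` is the paper's `s (K₁₂₁₂ + K₁₂₃₄) = c (K₁₂₁₃ - K₁₂₂₄)`, and with `s² + c² = 1`
it gives `c · Ric(Je₀, e₁) = K₀₁₀₁ + K₀₁₂₃`.
-/

open Real Matrix

theorem Matrix.update_vecCons₄_zero {α : Type*} (X Y Z W v : α) :
    Function.update ![X, Y, Z, W] 0 v = ![v, Y, Z, W] :=
  Fin.update_cons_zero ..

theorem Matrix.update_vecCons₄_one {α : Type*} (X Y Z W v : α) :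
    Function.update ![X, Y, Z, W] 1 v = ![X, v, Z, W] := by
  funext i; fin_cases i <;> rfl

variable {R V : Type*} [CommRing R] [AddCommGroup V] [Module R V]

section Frame

variable {ω : V →ₗ[R] V →ₗ[R] R} {J : V →ₗ[R] V} {e : Fin 4 → V} {c s : R}

theorem LinearMap.IsAlt.apply_zero_three_add_apply_one_two (hω : ω.IsAlt)
    (hJω : ∀ x y, ω (J x) (J y) = ω x y) (hsc : s ^ 2 + c ^ 2 = 1)
    (hJ0 : J (e 0) = c • e 1 + s • e 2) (hJ3 : J (e 3) = s • e 1 - c • e 2) :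
    ω (e 0) (e 3) + ω (e 1) (e 2) = 0 := by
  have h03 := hJω (e 0) (e 3)
  simp only [hJ0, hJ3, map_add, map_sub, map_smul, LinearMap.add_apply, LinearMap.smul_apply,
    smul_eq_mul, hω.self_eq_zero, ← hω.neg (e 1) (e 2)] at h03
  linear_combination -h03 - ω (e 1) (e 2) * hsc

theorem LinearMap.IsAlt.sin_mul_eq_cos_mul (hω : ω.IsAlt)
    (hJω : ∀ x y, ω (J x) (J y) = ω x y) (hsc : s ^ 2 + c ^ 2 = 1)
    (hJ0 : J (e 0) = c • e 1 + s • e 2) (hJ2 : J (e 2) = -s • e 0 + c • e 3)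
    (hJ3 : J (e 3) = s • e 1 - c • e 2) :
    s * (ω (e 0) (e 1) + ω (e 2) (e 3)) = c * (ω (e 0) (e 2) - ω (e 1) (e 3)) := by
  have h02 := hJω (e 0) (e 2)
  have h23 := hJω (e 2) (e 3)
  simp only [hJ0, hJ2, hJ3, map_add, map_sub, map_smul, LinearMap.add_apply, LinearMap.smul_apply,
    smul_eq_mul, ← hω.neg (e 0) (e 1), ← hω.neg (e 0) (e 2), ← hω.neg (e 1) (e 3),
    ← hω.neg (e 2) (e 3)] at h02 h23
  -- with `P = ω₀₁ + ω₂₃`, `Q = ω₀₂ - ω₁₃`, `h02` says `c (sP - cQ) = 0` and `h23` says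
  -- `s (sP - cQ) = 0`; no division by `c` is needed since `s² + c² = 1`
  linear_combination (-s) * h23 + c * h02 + (s * ω (e 2) (e 3) - c * ω (e 0) (e 2)
    - s * (ω (e 0) (e 1) + ω (e 2) (e 3)) + c * (ω (e 0) (e 2) - ω (e 1) (e 3))) * hsc

end Frame

namespace MultilinearMap

variable (K : MultilinearMap R (fun _ : Fin 4 => V) R)

def firstPair (Z W : V) : V →ₗ[R] V →ₗ[R] R :=
  LinearMap.mk₂ R (fun X Y => K ![X, Y, Z, W])
    (fun X₁ X₂ Y => by
      simpa only [update_vecCons₄_zero] using K.map_update_add ![X₁, Y, Z, W] 0 X₁ X₂)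
    (fun a X Y => by
      simpa only [update_vecCons₄_zero] using K.map_update_smul ![X, Y, Z, W] 0 a X)
    (fun X Y₁ Y₂ => by
      simpa only [update_vecCons₄_one] using K.map_update_add ![X, Y₁, Z, W] 1 Y₁ Y₂)
    (fun a X Y => by
      simpa only [update_vecCons₄_one] using K.map_update_smul ![X, Y, Z, W] 1 a Y)

@[simp]
theorem firstPair_apply (X Y Z W : V) : K.firstPair Z W X Y = K ![X, Y, Z, W] := rfl

structure IsCurvatureTensor : Prop where
  antisymm : ∀ X Y Z W, K ![X, Y, Z, W] = -K ![Y, X, Z, W]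
  symm_pairs : ∀ X Y Z W, K ![X, Y, Z, W] = K ![Z, W, X, Y]
  bianchi : ∀ X Y Z W, K ![X, Y, Z, W] + K ![Y, Z, X, W] + K ![Z, X, Y, W] = 0

namespace IsCurvatureTensor

variable {K}

theorem antisymm_right (hK : K.IsCurvatureTensor) (X Y Z W : V) :
    K ![X, Y, Z, W] = -K ![X, Y, W, Z] := by
  rw [hK.symm_pairs, hK.antisymm, hK.symm_pairs]

theorem apply_swap_swap (hK : K.IsCurvatureTensor) (X Y Z W : V) :
    K ![Y, X, W, Z] = K ![X, Y, Z, W] := by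
  rw [hK.antisymm, hK.antisymm_right, neg_neg]

variable [NoZeroDivisors R] [CharZero R]

theorem firstPair_isAlt (hK : K.IsCurvatureTensor) (Z W : V) : (K.firstPair Z W).IsAlt :=
  fun X => CharZero.eq_neg_self_iff.mp (hK.antisymm X X Z W)

theorem apply_self_left (hK : K.IsCurvatureTensor) (X Z W : V) : K ![X, X, Z, W] = 0 :=
  hK.firstPair_isAlt Z W X

theorem apply_self_right (hK : K.IsCurvatureTensor) (X Y Z : V) : K ![X, Y, Z, Z] = 0 := by
  rw [hK.symm_pairs]; exact hK.apply_self_left Z X Y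

variable {J : V →ₗ[R] V} {e : Fin 4 → V} {c s : R}

theorem sum_apply_J_zero_expand (hK : K.IsCurvatureTensor) (hJ0 : J (e 0) = c • e 1 + s • e 2) :
    ∑ A, K ![J (e 0), e A, e 1, e A]
      = c * (K ![e 0, e 1, e 0, e 1] + K ![e 1, e 2, e 1, e 2] + K ![e 1, e 3, e 1, e 3])
        + s * (K ![e 0, e 1, e 0, e 2] + K ![e 2, e 3, e 1, e 3]) := by
  simp only [← firstPair_apply, hJ0, map_add, map_smul, LinearMap.add_apply, LinearMap.smul_apply,
    smul_eq_mul, Fin.sum_univ_four]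
  simp only [firstPair_apply, hK.apply_self_left, hK.apply_self_right]
  rw [hK.apply_swap_swap (e 0) (e 1) (e 0) (e 1), hK.symm_pairs (e 2) (e 0),
    hK.apply_swap_swap (e 0) (e 1) (e 0) (e 2)]
  ring

theorem apply_zero_three_add_apply_one_two (hK : K.IsCurvatureTensor)
    (hJK : ∀ X Y Z W, K ![J X, J Y, Z, W] = K ![X, Y, Z, W]) (hsc : s ^ 2 + c ^ 2 = 1)
    (hJ0 : J (e 0) = c • e 1 + s • e 2) (hJ3 : J (e 3) = s • e 1 - c • e 2) (Z W : V) :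
    K ![e 0, e 3, Z, W] + K ![e 1, e 2, Z, W] = 0 :=
  (hK.firstPair_isAlt Z W).apply_zero_three_add_apply_one_two (fun X Y => hJK X Y Z W) hsc hJ0 hJ3

theorem sin_mul_eq_cos_mul (hK : K.IsCurvatureTensor)
    (hJK : ∀ X Y Z W, K ![J X, J Y, Z, W] = K ![X, Y, Z, W]) (hsc : s ^ 2 + c ^ 2 = 1)
    (hJ0 : J (e 0) = c • e 1 + s • e 2) (hJ2 : J (e 2) = -s • e 0 + c • e 3)
    (hJ3 : J (e 3) = s • e 1 - c • e 2) (Z W : V) :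
    s * (K ![e 0, e 1, Z, W] + K ![e 2, e 3, Z, W])
      = c * (K ![e 0, e 2, Z, W] - K ![e 1, e 3, Z, W]) :=
  (hK.firstPair_isAlt Z W).sin_mul_eq_cos_mul (fun X Y => hJK X Y Z W) hsc hJ0 hJ2 hJ3

theorem sum_apply_J_zero_eq (hK : K.IsCurvatureTensor)
    (hJK : ∀ X Y Z W, K ![J X, J Y, Z, W] = K ![X, Y, Z, W]) (hsc : s ^ 2 + c ^ 2 = 1)
    (hJ0 : J (e 0) = c • e 1 + s • e 2) (hJ2 : J (e 2) = -s • e 0 + c • e 3)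
    (hJ3 : J (e 3) = s • e 1 - c • e 2) :
    ∑ A, K ![J (e 0), e A, e 1, e A]
      = s * (K ![e 0, e 1, e 0, e 2] - K ![e 0, e 1, e 1, e 3])
        + c * (K ![e 0, e 1, e 0, e 1] + K ![e 0, e 1, e 2, e 3]) := by
  have key₁₃ := hK.sin_mul_eq_cos_mul hJK hsc hJ0 hJ2 hJ3 (e 1) (e 3)
  have bianchi := hK.bianchi (e 0) (e 1) (e 2) (e 3)
  rw [hK.antisymm (e 2) (e 0)] at bianchi
  have rel₁₂ : K ![e 1, e 2, e 1, e 2] + K ![e 1, e 2, e 0, e 3] = 0 := by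
    rw [← hK.symm_pairs (e 0) (e 3)]
    linear_combination hK.apply_zero_three_add_apply_one_two hJK hsc hJ0 hJ3 (e 1) (e 2)
  calc _ = c * (K ![e 0, e 1, e 0, e 1] + K ![e 1, e 2, e 1, e 2] + K ![e 1, e 3, e 1, e 3])
        + s * (K ![e 0, e 1, e 0, e 2] + K ![e 2, e 3, e 1, e 3]) := hK.sum_apply_J_zero_expand hJ0
    _ = s * (K ![e 0, e 1, e 0, e 2] - K ![e 0, e 1, e 1, e 3])
        + c * (K ![e 0, e 1, e 0, e 1] + K ![e 0, e 1, e 2, e 3])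
        + c * (K ![e 1, e 2, e 1, e 2] + K ![e 1, e 2, e 0, e 3]) := by
      linear_combination key₁₃ - c * bianchi
    _ = _ := by rw [rel₁₂]; ring

end IsCurvatureTensor

end MultilinearMap

theorem stmt_10_general (α : ℝ) (hc : Real.cos α ≠ 0)
    (K : MultilinearMap ℝ (fun _ : Fin 4 => (Fin 4 → ℝ)) ℝ)
    (e : Fin 4 → (Fin 4 → ℝ))
    (J : (Fin 4 → ℝ) →ₗ[ℝ] (Fin 4 → ℝ))
    (hJ0 : J (e 0) = Real.cos α • e 1 + Real.sin α • e 2)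
    (hJ2 : J (e 2) = -(Real.sin α) • e 0 + Real.cos α • e 3)
    (hJ3 : J (e 3) = Real.sin α • e 1 - Real.cos α • e 2)
    -- curvature tensor symmetries
    (hsym1 : ∀ X Y Z W : Fin 4 → ℝ, K ![X, Y, Z, W] = -K ![Y, X, Z, W])
    (hsym3 : ∀ X Y Z W : Fin 4 → ℝ, K ![X, Y, Z, W] = K ![Z, W, X, Y])
    -- first Bianchi identity
    (hbianchi : ∀ X Y Z W : Fin 4 → ℝ,
      K ![X, Y, Z, W] + K ![Y, Z, X, W] + K ![Z, X, Y, W] = 0)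
    -- J-invariance
    (hK : ∀ X Y Z W : Fin 4 → ℝ, K ![J X, J Y, Z, W] = K ![X, Y, Z, W])
    (Ric : (Fin 4 → ℝ) → (Fin 4 → ℝ) → ℝ)
    (hRic : ∀ X Y, Ric X Y = ∑ A : Fin 4, K ![X, e A, Y, e A]) :
    Ric (J (e 0)) (e 1)
        = Real.sin α * (K ![e 0, e 1, e 0, e 2] - K ![e 0, e 1, e 1, e 3])
          + Real.cos α * (K ![e 0, e 1, e 0, e 1] + K ![e 0, e 1, e 2, e 3]) ∧
    Ric (J (e 0)) (e 1)
        = (1 / Real.cos α) * (K ![e 0, e 1, e 0, e 1] + K ![e 0, e 1, e 2, e 3]) := by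
  have hsc := sin_sq_add_cos_sq α
  have hR : K.IsCurvatureTensor := ⟨hsym1, hsym3, hbianchi⟩
  have hRic₀₁ := (hRic _ _).trans (hR.sum_apply_J_zero_eq hK hsc hJ0 hJ2 hJ3)
  have key := hR.sin_mul_eq_cos_mul hK hsc hJ0 hJ2 hJ3 (e 0) (e 1)
  rw [hR.symm_pairs (e 2) (e 3), hR.symm_pairs (e 0) (e 2), hR.symm_pairs (e 1) (e 3)] at key
  refine ⟨hRic₀₁, ?_⟩
  rw [hRic₀₁]
  field_simp
  linear_combination (-sin α) * key + (K ![e 0, e 1, e 0, e 1] + K ![e 0, e 1, e 2, e 3]) * hsc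

theorem stmt_10 (α : ℝ) (hc : Real.cos α ≠ 0)
    (K : MultilinearMap ℝ (fun _ : Fin 4 => (Fin 4 → ℝ)) ℝ)
    (e : Fin 4 → (Fin 4 → ℝ)) (he : e = fun i => Pi.single i 1)
    (J : (Fin 4 → ℝ) →ₗ[ℝ] (Fin 4 → ℝ))
    (hJ0 : J (e 0) = Real.cos α • e 1 + Real.sin α • e 2)
    (hJ1 : J (e 1) = -(Real.cos α) • e 0 - Real.sin α • e 3)
    (hJ2 : J (e 2) = -(Real.sin α) • e 0 + Real.cos α • e 3)
    (hJ3 : J (e 3) = Real.sin α • e 1 - Real.cos α • e 2)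
    -- curvature tensor symmetries
    (hsym1 : ∀ X Y Z W : Fin 4 → ℝ, K ![X, Y, Z, W] = -K ![Y, X, Z, W])
    (hsym2 : ∀ X Y Z W : Fin 4 → ℝ, K ![X, Y, Z, W] = -K ![X, Y, W, Z])
    (hsym3 : ∀ X Y Z W : Fin 4 → ℝ, K ![X, Y, Z, W] = K ![Z, W, X, Y])
    -- first Bianchi identity
    (hbianchi : ∀ X Y Z W : Fin 4 → ℝ,
      K ![X, Y, Z, W] + K ![Y, Z, X, W] + K ![Z, X, Y, W] = 0)
    -- J-invariance
    (hK : ∀ X Y Z W : Fin 4 → ℝ, K ![J X, J Y, Z, W] = K ![X, Y, Z, W])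
    (Ric : (Fin 4 → ℝ) → (Fin 4 → ℝ) → ℝ)
    (hRic : ∀ X Y, Ric X Y = ∑ A : Fin 4, K ![X, e A, Y, e A]) :
    Ric (J (e 0)) (e 1)
        = Real.sin α * (K ![e 0, e 1, e 0, e 2] - K ![e 0, e 1, e 1, e 3])
          + Real.cos α * (K ![e 0, e 1, e 0, e 1] + K ![e 0, e 1, e 2, e 3]) ∧
    Ric (J (e 0)) (e 1)
        = (1 / Real.cos α) * (K ![e 0, e 1, e 0, e 1] + K ![e 0, e 1, e 2, e 3]) :=
  stmt_10_general α hc K e J hJ0 hJ2 hJ3 hsym1 hsym3 hbianchi hK Ric hRic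
end
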